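/- Define N^u_d(m) = Σ_{k=0}^{d} g_k(u,d)·p_k(m), where g_k(u,d) = C(d,k)·∏_{i=0}^{k-1}(r+i)·∏_{j=k+1}^{d}(d-j+r)(u+j+r) and p_k(m) = ∏_{i=0}^{k-1}(m+i+1-r). Then (u+d+m)(u-m+r)·N^u_d(m) = Σ_{k=0}^{d} g_k(u,d)·[ (u+d-k-1+r)(u+k+1)·p_k(m) + (2k+3-d-r)·p_{k+1}(m) − p_{k+2}(m) ], as an identity of polynomials in m, u-placeholder variables and r, for all natural numbers u and d. -/

import Mathlib

/-!
The identity holds summand by summand, whatever the weights `g k u d` are: factoring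
`p (k + 2) m = p k m * (m + k + 1 - r) * (m + k + 2 - r)` out of the bracket leaves a quadratic
polynomial in `m` equal to `(u + d + m) * (u - m + r)`.
-/

open Finset

/-- The two-variable polynomial ring `ℚ[m, r]`: variable `0` is `m` and variable `1` is `r`. -/
noncomputable abbrev R2 : Type := MvPolynomial (Fin 2) ℚ

noncomputable def r : R2 := MvPolynomial.X 1

/-- `p k m = ∏_{i=0}^{k-1} (m+i+1-r)`, as a function of the element `m`. -/
noncomputable def p (k : ℕ) (m : R2) : R2 :=
  ∏ i ∈ Finset.range k, (m + (i : R2) + 1 - r)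

/-- `g k u d = C(d,k) · ∏_{i=0}^{k-1}(r+i) · ∏_{j=k+1}^{d}(d-j+r)(u+j+r)`. -/
noncomputable def g (k u d : ℕ) : R2 :=
  (d.choose k : R2) * (∏ i ∈ Finset.range k, (r + (i : R2))) *
    ∏ j ∈ Finset.Icc (k + 1) d, (((d : R2) - (j : R2) + r) * ((u : R2) + (j : R2) + r))

/-- `N u d m = Σ_{k=0}^{d} g_k(u,d) · p_k(m)`, as a function of the element `m`. -/
noncomputable def N (u d : ℕ) (m : R2) : R2 :=
  ∑ k ∈ Finset.range (d + 1), g k u d * p k m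

theorem p_succ (k : ℕ) (m : R2) : p (k + 1) m = p k m * (m + k + 1 - r) := by
  simp only [p, prod_range_succ]

theorem mul_p_eq_p_combination (u d m : R2) (k : ℕ) :
    (u + d + m) * (u - m + r) * p k m =
      (u + d - k - 1 + r) * (u + k + 1) * p k m + (2 * k + 3 - d - r) * p (k + 1) m -
        p (k + 2) m := by
  rw [p_succ (k + 1), p_succ k]
  push_cast
  ring

theorem stmt15 (u d : ℕ) :
    ((u : R2) + (d : R2) + MvPolynomial.X 0) * ((u : R2) - MvPolynomial.X 0 + r) *
        N u d (MvPolynomial.X 0) =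
      ∑ k ∈ Finset.range (d + 1),
        g k u d *
          (((u : R2) + (d : R2) - (k : R2) - 1 + r) * ((u : R2) + (k : R2) + 1) *
              p k (MvPolynomial.X 0) +
            (2 * (k : R2) + 3 - (d : R2) - r) * p (k + 1) (MvPolynomial.X 0) -
            p (k + 2) (MvPolynomial.X 0)) := by
  rw [N, mul_sum]
  refine sum_congr rfl fun k _ => ?_
  rw [← mul_p_eq_p_combination, mul_left_comm]
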